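/- Suppose D is binary with propensity score p(X) = ℙ(D=1|X), δ ≤ p(X) ≤ 1−δ a.s., and unconfoundedness holds: (Y(1), Y(0)) ⫫ D | X, with Y = DY(1) + (1−D)Y(0) and E[|Y(d)|] < ∞ for d ∈ {0,1}. Then E[D·Y/p(X)] = E[Y(1)] and E[(1−D)·Y/(1−p(X))] = E[Y(0)]; consequently E[(D/p(X) − (1−D)/(1−p(X)))·Y] = E[Y(1) − Y(0)]. -/

import Mathlib

/-!
Write `m = σ(X)`. For a bounded `m`-measurable weight `g` and an integrable
`σ(Y(1), Y(0))`-measurable `f`, unconfoundedness gives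
`E[1{D ∈ t} g f] = E[P(D ∈ t | X) g f]`. For `f = 1_B` this is the factorisation
`P(B ∩ {D ∈ t} | X) = P(B | X) P(D ∈ t | X)` integrated against `g`, by the pull-out property;
hence both weights have the same conditional expectation given `σ(Y(1), Y(0))`, and the identity
extends to every such `f`. With `t = {1}` and `g = 1/p(X)` (bounded by `1/δ`) the weight cancels
`P(D = 1 | X) = p(X)`, leaving `E[Y(1)]`; symmetrically for `t = {0}`, `g = 1/(1 - p(X))`.
-/

open MeasureTheory ProbabilityTheory Filter

theorem norm_indicator_one_le {α : Type*} (s : Set α) (a : α) :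
    ‖s.indicator (fun _ ↦ (1 : ℝ)) a‖ ≤ 1 :=
  (norm_indicator_le_norm_self _ a).trans_eq norm_one

section ConditionalExpectation

-- `mΩ` comes last so that it is the instance behind unannotated measurability statements.
variable {Ω : Type*} {m mY mΩ : MeasurableSpace Ω} {μ : Measure Ω} [IsFiniteMeasure μ]

theorem integral_condExp_mul_of_stronglyMeasurable_right (hm : m ≤ mΩ) {f g : Ω → ℝ}
    (hg : StronglyMeasurable[m] g) (hfg : Integrable (f * g) μ) (hf : Integrable f μ) :
    ∫ ω, μ[f | m] ω * g ω ∂μ = ∫ ω, f ω * g ω ∂μ :=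
  (integral_congr_ae (condExp_mul_of_stronglyMeasurable_right hg hfg hf).symm).trans
    (integral_condExp hm)

theorem condExp_ae_eq_of_forall_setIntegral_eq (hm : m ≤ mΩ) {u v : Ω → ℝ}
    (hu : Integrable u μ) (hv : Integrable v μ)
    (huv : ∀ s, MeasurableSet[m] s → ∫ ω in s, u ω ∂μ = ∫ ω in s, v ω ∂μ) :
    μ[u | m] =ᵐ[μ] μ[v | m] :=
  ae_eq_condExp_of_forall_setIntegral_eq hm hv (fun _ _ _ ↦ integrable_condExp.integrableOn)
    (fun s hs _ ↦ by rw [setIntegral_condExp hm hu hs, huv s hs])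
    stronglyMeasurable_condExp.aestronglyMeasurable

theorem integral_mul_eq_of_forall_setIntegral_eq (hm : m ≤ mΩ) {u v : Ω → ℝ} {C : ℝ}
    (hu : AEStronglyMeasurable u μ) (huC : ∀ᵐ ω ∂μ, ‖u ω‖ ≤ C)
    (hv : AEStronglyMeasurable v μ) (hvC : ∀ᵐ ω ∂μ, ‖v ω‖ ≤ C)
    (huv : ∀ s, MeasurableSet[m] s → ∫ ω in s, u ω ∂μ = ∫ ω in s, v ω ∂μ)
    {f : Ω → ℝ} (hf : StronglyMeasurable[m] f) (hfi : Integrable f μ) :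
    ∫ ω, u ω * f ω ∂μ = ∫ ω, v ω * f ω ∂μ := by
  have hui : Integrable u μ := .of_bound hu C huC
  have hvi : Integrable v μ := .of_bound hv C hvC
  calc ∫ ω, u ω * f ω ∂μ = ∫ ω, μ[u | m] ω * f ω ∂μ :=
        (integral_condExp_mul_of_stronglyMeasurable_right hm hf
          (hfi.bdd_mul hu huC) hui).symm
    _ = ∫ ω, μ[v | m] ω * f ω ∂μ := by
        refine integral_congr_ae ?_
        filter_upwards [condExp_ae_eq_of_forall_setIntegral_eq hm hui hvi huv] with ω hω
        rw [hω]
    _ = ∫ ω, v ω * f ω ∂μ :=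
        integral_condExp_mul_of_stronglyMeasurable_right hm hf (hfi.bdd_mul hv hvC) hvi

theorem integral_indicator_mul_mul_eq_of_condExp_inter_eq_mul (hm : m ≤ mΩ) (hmY : mY ≤ mΩ)
    {A : Set Ω} (hA : MeasurableSet A)
    (hfactor : ∀ B, MeasurableSet[mY] B → μ⟦B ∩ A | m⟧ =ᵐ[μ] μ⟦B | m⟧ * μ⟦A | m⟧)
    {g : Ω → ℝ} {C : ℝ} (hg : StronglyMeasurable[m] g) (hgC : ∀ᵐ ω ∂μ, ‖g ω‖ ≤ C)
    {f : Ω → ℝ} (hf : StronglyMeasurable[mY] f) (hfi : Integrable f μ) :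
    ∫ ω, A.indicator (fun _ ↦ 1) ω * g ω * f ω ∂μ = ∫ ω, (μ⟦A | m⟧) ω * g ω * f ω ∂μ := by
  have indicator_le (s : Set Ω) : ∀ᵐ ω ∂μ, ‖s.indicator (fun _ ↦ (1 : ℝ)) ω‖ ≤ 1 :=
    .of_forall (norm_indicator_one_le s)
  have le_one_mul {a : Ω → ℝ} (ha : ∀ᵐ ω ∂μ, ‖a ω‖ ≤ 1) : ∀ᵐ ω ∂μ, ‖a ω * g ω‖ ≤ C := by
    filter_upwards [ha, hgC] with ω haω hgω
    simpa using norm_mul_le_of_le haω hgω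
  have hind (s : Set Ω) (hs : MeasurableSet s) :
      AEStronglyMeasurable (s.indicator (fun _ ↦ (1 : ℝ))) μ :=
    (stronglyMeasurable_const.indicator hs).aestronglyMeasurable
  have hgμ : AEStronglyMeasurable g μ := (hg.mono hm).aestronglyMeasurable
  have he : ∀ᵐ ω ∂μ, ‖(μ⟦A | m⟧) ω‖ ≤ 1 := ae_bdd_norm_condExp_of_ae_bdd_norm (indicator_le A)
  have hem : AEStronglyMeasurable (fun ω ↦ (μ⟦A | m⟧) ω * g ω) μ :=
    (stronglyMeasurable_condExp.mono hm).aestronglyMeasurable.mul hgμ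
  have hgi : Integrable g μ := .of_bound hgμ C hgC
  have hegi : Integrable (fun ω ↦ (μ⟦A | m⟧) ω * g ω) μ := .of_bound hem C (le_one_mul he)
  refine integral_mul_eq_of_forall_setIntegral_eq hmY ((hind A hA).mul hgμ)
    (le_one_mul (indicator_le A)) hem (le_one_mul he) (fun B hB ↦ ?_) hf hfi
  have hBΩ := hmY B hB
  calc ∫ ω in B, A.indicator (fun _ ↦ 1) ω * g ω ∂μ
      = ∫ ω, (B ∩ A).indicator (fun _ ↦ 1) ω * g ω ∂μ := by
        rw [← integral_indicator hBΩ]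
        congr with ω
        by_cases hωB : ω ∈ B <;> by_cases hωA : ω ∈ A <;> simp [hωB, hωA]
    _ = ∫ ω, (μ⟦B ∩ A | m⟧) ω * g ω ∂μ :=
        (integral_condExp_mul_of_stronglyMeasurable_right hm hg
          (hgi.bdd_mul (hind _ (hBΩ.inter hA)) (indicator_le _))
          ((integrable_const 1).indicator (hBΩ.inter hA))).symm
    _ = ∫ ω, (μ⟦B | m⟧) ω * ((μ⟦A | m⟧) ω * g ω) ∂μ := by
        refine integral_congr_ae ?_
        filter_upwards [hfactor B hB] with ω hω
        rw [hω, Pi.mul_apply, mul_assoc]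
    _ = ∫ ω, B.indicator (fun _ ↦ 1) ω * ((μ⟦A | m⟧) ω * g ω) ∂μ :=
        integral_condExp_mul_of_stronglyMeasurable_right hm (stronglyMeasurable_condExp.mul hg)
          (hegi.bdd_mul (hind B hBΩ) (indicator_le B)) ((integrable_const 1).indicator hBΩ)
    _ = ∫ ω in B, (μ⟦A | m⟧) ω * g ω ∂μ := by
        rw [← integral_indicator hBΩ]
        congr with ω
        by_cases hωB : ω ∈ B <;> simp [hωB]

end ConditionalExpectation

section BinaryTreatment

variable {Ω : Type*} {D : Ω → ℝ}

theorem indicator_preimage_one_eq_self (hD : ∀ ω, D ω = 0 ∨ D ω = 1) :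
    (D ⁻¹' {1}).indicator (fun _ ↦ (1 : ℝ)) = D :=
  funext fun ω ↦ by rcases hD ω with h | h <;> simp [h]

theorem indicator_preimage_zero_eq_one_sub (hD : ∀ ω, D ω = 0 ∨ D ω = 1) :
    (D ⁻¹' {0}).indicator (fun _ ↦ (1 : ℝ)) = (fun _ ↦ 1) - D :=
  funext fun ω ↦ by rcases hD ω with h | h <;> simp [h]

theorem condExp_indicator_preimage_zero {m mΩ : MeasurableSpace Ω} {μ : Measure Ω}
    [IsFiniteMeasure μ] (hm : m ≤ mΩ) (hDm : Measurable D) (hD : ∀ ω, D ω = 0 ∨ D ω = 1) :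
    μ⟦D ⁻¹' {0} | m⟧ =ᵐ[μ] fun ω ↦ 1 - μ[D | m] ω := by
  have hDi : Integrable D μ := indicator_preimage_one_eq_self hD ▸
    (integrable_const 1).indicator (hDm (measurableSet_singleton 1))
  rw [indicator_preimage_zero_eq_one_sub hD]
  filter_upwards [condExp_sub (integrable_const 1) hDi m] with ω hω
  rw [hω, Pi.sub_apply, condExp_const hm]

end BinaryTreatment

section InverseProbabilityWeighting

variable {Ω β γ : Type*} {m mΩ : MeasurableSpace Ω} [StandardBorelSpace Ω] {hm : m ≤ mΩ}
  {μ : Measure Ω} [IsFiniteMeasure μ] {mβ : MeasurableSpace β} {mγ : MeasurableSpace γ}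
  {Z : Ω → β} {W : Ω → γ}

theorem ProbabilityTheory.CondIndepFun.integral_indicator_mul_div_eq_integral
    (hZW : CondIndepFun m hm Z W μ) (hZ : Measurable Z) (hW : Measurable W)
    {t : Set γ} (ht : MeasurableSet t)
    {π : Ω → ℝ} (hπ : Measurable[m] π) (hπt : μ⟦W ⁻¹' t | m⟧ =ᵐ[μ] π)
    {δ : ℝ} (hδ : 0 < δ) (hπδ : ∀ᵐ ω ∂μ, δ ≤ π ω)
    {f : Ω → ℝ} (hf : StronglyMeasurable[mβ.comap Z] f) (hfi : Integrable f μ) :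
    Integrable (fun ω ↦ (W ⁻¹' t).indicator (fun _ ↦ 1) ω * f ω / π ω) μ ∧
      ∫ ω, (W ⁻¹' t).indicator (fun _ ↦ 1) ω * f ω / π ω ∂μ = ∫ ω, f ω ∂μ := by
  have hfactor : ∀ B, MeasurableSet[mβ.comap Z] B →
      μ⟦B ∩ W ⁻¹' t | m⟧ =ᵐ[μ] μ⟦B | m⟧ * μ⟦W ⁻¹' t | m⟧ := by
    rintro _ ⟨s, hs, rfl⟩
    exact (condIndepFun_iff_condExp_inter_preimage_eq_mul hZ hW).mp hZW s t hs ht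
  have hπinv : ∀ᵐ ω ∂μ, ‖(π ω)⁻¹‖ ≤ δ⁻¹ := by
    filter_upwards [hπδ] with ω hω
    rw [norm_inv, Real.norm_of_nonneg (hδ.le.trans hω)]
    exact inv_anti₀ hδ hω
  have hdiv_eq : (fun ω ↦ (W ⁻¹' t).indicator (fun _ ↦ (1 : ℝ)) ω * f ω / π ω) =
      fun ω ↦ (W ⁻¹' t).indicator (fun _ ↦ 1) ω * (π ω)⁻¹ * f ω := by
    ext ω; ring
  refine ⟨?_, ?_⟩
  · rw [hdiv_eq]
    exact hfi.bdd_mul (((stronglyMeasurable_const.indicator (hW ht)).mul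
      (hπ.inv.stronglyMeasurable.mono hm)).aestronglyMeasurable)
      (by filter_upwards [hπinv] with ω hω
          simpa using norm_mul_le_of_le (norm_indicator_one_le _ ω) hω)
  rw [hdiv_eq, integral_indicator_mul_mul_eq_of_condExp_inter_eq_mul hm hZ.comap_le (hW ht) hfactor
    (g := fun ω ↦ (π ω)⁻¹) hπ.inv.stronglyMeasurable hπinv hf hfi]
  refine integral_congr_ae ?_
  filter_upwards [hπt, hπδ] with ω hωt hωδ
  rw [hωt, mul_inv_cancel₀ (hδ.trans_le hωδ).ne', one_mul]

end InverseProbabilityWeighting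

/-- IPW identification of the average treatment effect under unconfoundedness:
`E[DY/p(X)] = E[Y(1)]`, `E[(1−D)Y/(1−p(X))] = E[Y(0)]`, and hence
`E[(D/p(X) − (1−D)/(1−p(X)))Y] = E[Y(1) − Y(0)]`. -/
theorem statement12 {Ω : Type*} [MeasurableSpace Ω] [StandardBorelSpace Ω]
    (μ : Measure Ω) [IsProbabilityMeasure μ]
    {k : ℕ} (D Y0 Y1 Y : Ω → ℝ) (X : Ω → Fin k → ℝ) (p : (Fin k → ℝ) → ℝ) (δ : ℝ)
    (hD : Measurable D) (hY0 : Measurable Y0) (hY1 : Measurable Y1)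
    (hX : Measurable X) (hp : Measurable p)
    (hDval : ∀ ω, D ω = 0 ∨ D ω = 1)
    (hδ : 0 < δ) (hpb : ∀ᵐ ω ∂μ, δ ≤ p (X ω) ∧ p (X ω) ≤ 1 - δ)
    (hpcond : μ[D | MeasurableSpace.comap X inferInstance] =ᵐ[μ] fun ω => p (X ω))
    (hunconf : CondIndepFun (MeasurableSpace.comap X inferInstance) hX.comap_le
      (fun ω => (Y1 ω, Y0 ω)) D μ)
    (hY1int : Integrable Y1 μ) (hY0int : Integrable Y0 μ)
    (hY : ∀ ω, Y ω = D ω * Y1 ω + (1 - D ω) * Y0 ω) :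
    (∫ ω, D ω * Y ω / p (X ω) ∂μ = ∫ ω, Y1 ω ∂μ) ∧
    (∫ ω, (1 - D ω) * Y ω / (1 - p (X ω)) ∂μ = ∫ ω, Y0 ω ∂μ) ∧
    (∫ ω, (D ω / p (X ω) - (1 - D ω) / (1 - p (X ω))) * Y ω ∂μ
      = ∫ ω, (Y1 ω - Y0 ω) ∂μ) := by
  have hpX : Measurable[MeasurableSpace.comap X inferInstance] fun ω ↦ p (X ω) :=
    hp.comp (comap_measurable X)
  have hprop1 : μ⟦D ⁻¹' {1} | MeasurableSpace.comap X inferInstance⟧ =ᵐ[μ] fun ω ↦ p (X ω) := by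
    rwa [indicator_preimage_one_eq_self hDval]
  have hprop0 : μ⟦D ⁻¹' {0} | MeasurableSpace.comap X inferInstance⟧ =ᵐ[μ]
      fun ω ↦ 1 - p (X ω) := by
    filter_upwards [condExp_indicator_preimage_zero hX.comap_le hD hDval, hpcond] with ω h0 h1
    rw [h0, h1]
  obtain ⟨hI1, hE1⟩ := hunconf.integral_indicator_mul_div_eq_integral (hY1.prodMk hY0) hD
    (measurableSet_singleton 1) hpX hprop1 hδ (hpb.mono fun _ h ↦ h.1)
    (f := Y1) (measurable_fst.comp (comap_measurable _)).stronglyMeasurable hY1int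
  obtain ⟨hI0, hE0⟩ := hunconf.integral_indicator_mul_div_eq_integral (hY1.prodMk hY0) hD
    (measurableSet_singleton 0) (π := fun ω ↦ 1 - p (X ω)) (measurable_const.sub hpX) hprop0 hδ
    (hpb.mono fun _ h ↦ by linarith [h.2])
    (f := Y0) (measurable_snd.comp (comap_measurable _)).stronglyMeasurable hY0int
  have htreated : (fun ω ↦ D ω * Y ω / p (X ω)) =
      fun ω ↦ (D ⁻¹' {1}).indicator (fun _ ↦ 1) ω * Y1 ω / p (X ω) :=
    funext fun ω ↦ by rcases hDval ω with h | h <;> simp [hY, h]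
  have hcontrol : (fun ω ↦ (1 - D ω) * Y ω / (1 - p (X ω))) =
      fun ω ↦ (D ⁻¹' {0}).indicator (fun _ ↦ 1) ω * Y0 ω / (1 - p (X ω)) :=
    funext fun ω ↦ by rcases hDval ω with h | h <;> simp [hY, h]
  rw [← htreated] at hI1 hE1
  rw [← hcontrol] at hI0 hE0
  refine ⟨hE1, hE0, ?_⟩
  calc ∫ ω, (D ω / p (X ω) - (1 - D ω) / (1 - p (X ω))) * Y ω ∂μ
      = ∫ ω, (D ω * Y ω / p (X ω) - (1 - D ω) * Y ω / (1 - p (X ω))) ∂μ := by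
        congr with ω
        ring
    _ = ∫ ω, (Y1 ω - Y0 ω) ∂μ := by
        rw [integral_sub hI1 hI0, integral_sub hY1int hY0int, hE1, hE0]
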